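/- For the complete bipartite graph K_{m,n} with m, n ≥ 1 and m+n ≥ 3, the least doubling constant is C_{K_{m,n}} = 1 + √(mn). -/
import Mathlib

/-- The closed ball of center `v` and real radius `r` in the path metric of `G`. -/
noncomputable def graphBall {V : Type*} [Fintype V] (G : SimpleGraph V) (v : V) (r : ℝ) :
    Finset V :=
  Finset.univ.filter (fun w => (G.dist v w : ℝ) ≤ r)

namespace Stmt13

variable {m n : ℕ}

abbrev G (m n : ℕ) := completeBipartiteGraph (Fin m) (Fin n)

lemma dist_lr (i : Fin m) (j : Fin n) : (G m n).dist (.inl i) (.inr j) = 1 :=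
  SimpleGraph.dist_eq_one_iff_adj.mpr (by simp)

lemma dist_rl (j : Fin n) (i : Fin m) : (G m n).dist (.inr j) (.inl i) = 1 :=
  SimpleGraph.dist_eq_one_iff_adj.mpr (by simp)

lemma dist_ll (hn : 1 ≤ n) (i i' : Fin m) (h : i ≠ i') :
    (G m n).dist (.inl i) (.inl i') = 2 := by
  obtain ⟨j⟩ : Nonempty (Fin n) := ⟨⟨0, hn⟩⟩
  have h1 : (G m n).Adj (.inl i) (.inr j) := by simp
  have h2 : (G m n).Adj (.inr j) (.inl i') := by simp
  let w : (G m n).Walk (.inl i) (.inl i') := .cons h1 (.cons h2 .nil)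
  have hle := SimpleGraph.dist_le w
  rw [show w.length = 2 from rfl] at hle
  have h0 : (G m n).dist (.inl i) (.inl i') ≠ 0 := by
    intro hd
    rcases SimpleGraph.dist_eq_zero_iff_eq_or_not_reachable.mp hd with h'|h'
    · exact h (by simpa using h')
    · exact h' ⟨w⟩
  have h1' : (G m n).dist (.inl i) (.inl i') ≠ 1 := by
    intro hd
    have := SimpleGraph.dist_eq_one_iff_adj.mp hd
    simp at this
  omega

lemma dist_rr (hm : 1 ≤ m) (j j' : Fin n) (h : j ≠ j') :
    (G m n).dist (.inr j) (.inr j') = 2 := by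
  obtain ⟨i⟩ : Nonempty (Fin m) := ⟨⟨0, hm⟩⟩
  have h1 : (G m n).Adj (.inr j) (.inl i) := by simp
  have h2 : (G m n).Adj (.inl i) (.inr j') := by simp
  let w : (G m n).Walk (.inr j) (.inr j') := .cons h1 (.cons h2 .nil)
  have hle := SimpleGraph.dist_le w
  rw [show w.length = 2 from rfl] at hle
  have h0 : (G m n).dist (.inr j) (.inr j') ≠ 0 := by
    intro hd
    rcases SimpleGraph.dist_eq_zero_iff_eq_or_not_reachable.mp hd with h'|h'
    · exact h (by simpa using h')
    · exact h' ⟨w⟩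
  have h1' : (G m n).dist (.inr j) (.inr j') ≠ 1 := by
    intro hd
    have := SimpleGraph.dist_eq_one_iff_adj.mp hd
    simp at this
  omega

lemma one_le_dist (hm : 1 ≤ m) (hn : 1 ≤ n) (v w : Fin m ⊕ Fin n) (h : v ≠ w) :
    1 ≤ (G m n).dist v w := by
  match v, w with
  | .inl i, .inl i' => rw [dist_ll hn i i' (by simpa using h)]; omega
  | .inl i, .inr j => rw [dist_lr]
  | .inr j, .inl i => rw [dist_rl]
  | .inr j, .inr j' => rw [dist_rr hm j j' (by simpa using h)]; omega

lemma dist_le_two (hm : 1 ≤ m) (hn : 1 ≤ n) (v w : Fin m ⊕ Fin n) :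
    (G m n).dist v w ≤ 2 := by
  by_cases h : v = w
  · subst h; rw [SimpleGraph.dist_self]; omega
  · match v, w with
    | .inl i, .inl i' => rw [dist_ll hn i i' (by simpa using h)]
    | .inl i, .inr j => rw [dist_lr]; omega
    | .inr j, .inl i => rw [dist_rl]; omega
    | .inr j, .inr j' => rw [dist_rr hm j j' (by simpa using h)]


/-- closed neighborhood as a Finset -/
noncomputable def nbhd (m n : ℕ) : Fin m ⊕ Fin n → Finset (Fin m ⊕ Fin n)
  | .inl i => insert (Sum.inl i) (Finset.univ.image Sum.inr)
  | .inr j => insert (Sum.inr j) (Finset.univ.image Sum.inl)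

lemma ball_small (hm : 1 ≤ m) (hn : 1 ≤ n) (v : Fin m ⊕ Fin n) {r : ℝ}
    (h0 : 0 ≤ r) (h1 : r < 1) : graphBall (G m n) v r = {v} := by
  ext w
  simp only [graphBall, Finset.mem_filter, Finset.mem_univ, true_and, Finset.mem_singleton]
  constructor
  · intro hw
    by_contra hne
    have hd := one_le_dist hm hn v w (Ne.symm hne)
    have : (1:ℝ) ≤ ((G m n).dist v w : ℝ) := by exact_mod_cast hd
    linarith
  · intro hw; subst hw; rw [SimpleGraph.dist_self]; simpa using h0

lemma ball_mid (hm : 1 ≤ m) (hn : 1 ≤ n) (v : Fin m ⊕ Fin n) {r : ℝ}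
    (h1 : 1 ≤ r) (h2 : r < 2) : graphBall (G m n) v r = nbhd m n v := by
  ext w
  simp only [graphBall, Finset.mem_filter, Finset.mem_univ, true_and]
  match v, w with
  | .inl i, .inl i' =>
    simp only [nbhd, Finset.mem_insert, Finset.mem_image, Finset.mem_univ]
    constructor
    · intro hw
      left
      by_contra hne
      rw [dist_ll hn i i' (fun h => hne (by rw [h]))] at hw
      push_cast at hw; linarith
    · rintro (h | ⟨j, _, h⟩)
      · rw [h, SimpleGraph.dist_self]; push_cast; linarith
      · exact absurd h (by simp)
  | .inl i, .inr j =>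
    simp only [nbhd, Finset.mem_insert, Finset.mem_image, Finset.mem_univ]
    rw [dist_lr]
    constructor
    · intro _; right; exact ⟨j, trivial, rfl⟩
    · intro _; push_cast; linarith
  | .inr j, .inl i =>
    simp only [nbhd, Finset.mem_insert, Finset.mem_image, Finset.mem_univ]
    rw [dist_rl]
    constructor
    · intro _; right; exact ⟨i, trivial, rfl⟩
    · intro _; push_cast; linarith
  | .inr j, .inr j' =>
    simp only [nbhd, Finset.mem_insert, Finset.mem_image, Finset.mem_univ]
    constructor
    · intro hw
      left
      by_contra hne
      rw [dist_rr hm j j' (fun h => hne (by rw [h]))] at hw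
      push_cast at hw; linarith
    · rintro (h | ⟨i, _, h⟩)
      · rw [h, SimpleGraph.dist_self]; push_cast; linarith
      · exact absurd h (by simp)

lemma ball_big (hm : 1 ≤ m) (hn : 1 ≤ n) (v : Fin m ⊕ Fin n) {r : ℝ}
    (h2 : 2 ≤ r) : graphBall (G m n) v r = Finset.univ := by
  ext w
  simp only [graphBall, Finset.mem_filter, Finset.mem_univ, true_and, iff_true]
  have := dist_le_two hm hn v w
  have : ((G m n).dist v w : ℝ) ≤ 2 := by exact_mod_cast this
  linarith

lemma sum_nbhd_inl (μ : Fin m ⊕ Fin n → ℝ) (i : Fin m) :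
    ∑ w ∈ nbhd m n (.inl i), μ w = μ (.inl i) + ∑ j, μ (.inr j) := by
  rw [nbhd, Finset.sum_insert (by simp), Finset.sum_image (fun _ _ _ _ h => by
    simpa using h)]

lemma sum_nbhd_inr (μ : Fin m ⊕ Fin n → ℝ) (j : Fin n) :
    ∑ w ∈ nbhd m n (.inr j), μ w = μ (.inr j) + ∑ i, μ (.inl i) := by
  rw [nbhd, Finset.sum_insert (by simp), Finset.sum_image (fun _ _ _ _ h => by
    simpa using h)]

lemma sum_all (μ : Fin m ⊕ Fin n → ℝ) :
    ∑ w, μ w = (∑ i, μ (.inl i)) + ∑ j, μ (.inr j) :=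
  Fintype.sum_sum_type μ


noncomputable def F (m n : ℕ) (μ : Fin m ⊕ Fin n → ℝ) (v : Fin m ⊕ Fin n) (r : ℝ) : ℝ :=
  (∑ w ∈ graphBall (G m n) v (2*r), μ w) / (∑ w ∈ graphBall (G m n) v r, μ w)

lemma nbhd_sum_pos (μ : Fin m ⊕ Fin n → ℝ) (hμ : ∀ v, 0 < μ v) (v : Fin m ⊕ Fin n) :
    0 < ∑ w ∈ nbhd m n v, μ w :=
  Finset.sum_pos (fun w _ => hμ w) (match v with
    | .inl i => ⟨Sum.inl i, by simp [nbhd]⟩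
    | .inr j => ⟨Sum.inr j, by simp [nbhd]⟩)

lemma total_pos (hm : 1 ≤ m) (μ : Fin m ⊕ Fin n → ℝ) (hμ : ∀ v, 0 < μ v) :
    0 < ∑ w, μ w := by
  have : Nonempty (Fin m ⊕ Fin n) := ⟨Sum.inl ⟨0, hm⟩⟩
  exact Finset.sum_pos (fun w _ => hμ w) Finset.univ_nonempty

set_option linter.unusedSectionVars false

section vals

variable (hm : 1 ≤ m) (hn : 1 ≤ n) (μ : Fin m ⊕ Fin n → ℝ) (hμ : ∀ v, 0 < μ v)

include hm hn hμ

lemma F_zero (v : Fin m ⊕ Fin n) : F m n μ v 0 = 1 := by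
  rw [F, mul_zero, ball_small hm hn v le_rfl one_pos, Finset.sum_singleton,
    div_self (hμ v).ne']

lemma F_half (v : Fin m ⊕ Fin n) :
    F m n μ v (1/2) = (∑ w ∈ nbhd m n v, μ w) / μ v := by
  rw [F, show (2:ℝ) * (1/2) = 1 by norm_num,
    ball_mid hm hn v le_rfl one_lt_two,
    ball_small hm hn v (by norm_num) (by norm_num), Finset.sum_singleton]

lemma F_one (v : Fin m ⊕ Fin n) :
    F m n μ v 1 = (∑ w, μ w) / ∑ w ∈ nbhd m n v, μ w := by
  rw [F, mul_one, ball_mid hm hn v le_rfl one_lt_two,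
    ball_big hm hn v le_rfl]

lemma F_cases (v : Fin m ⊕ Fin n) {r : ℝ} (hr : 0 ≤ r) :
    F m n μ v r = 1 ∨ F m n μ v r = (∑ w ∈ nbhd m n v, μ w) / μ v ∨
      F m n μ v r = (∑ w, μ w) / ∑ w ∈ nbhd m n v, μ w := by
  rcases lt_or_ge r (1/2) with h | h
  · left
    rw [F, ball_small hm hn v hr (by linarith),
      ball_small hm hn v (by linarith) (by linarith), Finset.sum_singleton,
      div_self (hμ v).ne']
  rcases lt_or_ge r 1 with h1 | h1
  · right; left
    rw [F, ball_small hm hn v hr h1, ball_mid hm hn v (by linarith) (by linarith),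
      Finset.sum_singleton]
  rcases lt_or_ge r 2 with h2 | h2
  · right; right
    rw [F, ball_mid hm hn v h1 h2, ball_big hm hn v (by linarith)]
  · left
    rw [F, ball_big hm hn v h2, ball_big hm hn v (by linarith),
      div_self (total_pos hm μ hμ).ne']

end vals

lemma key_ineq (x y mr nr : ℝ) (hx : 0 < x) (hy : 0 < y) (hx2 : x^2 = mr)
    (hy2 : y^2 = nr) (hm1 : 1 ≤ mr) (hn1 : 1 ≤ nr) :
    (y + nr*x)/y ≤ 1 + x*y ∧ (mr*y + nr*x)/(y + nr*x) ≤ 1 + x*y := by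
  subst hx2; subst hy2
  have hx1 : 1 ≤ x := by nlinarith
  have hy1 : 1 ≤ y := by nlinarith
  have hd : 0 < y + y^2*x := by positivity
  have hkey : (0:ℝ) ≤ x^2*y*(y^2-1) := by
    have : (0:ℝ) ≤ y^2 - 1 := by nlinarith
    positivity
  constructor
  · rw [div_le_iff₀ hy]; nlinarith
  · rw [div_le_iff₀ hd]
    nlinarith [mul_nonneg hx.le (sq_nonneg y), hy.le, hkey]

end Stmt13

open Stmt13 in
/-- the least doubling constant of the complete bipartite graph
`K_{m,n}` (with `m, n ≥ 1`, `m + n ≥ 3`) equals `1 + √(mn)`. -/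
theorem stmt_13 (m n : ℕ) (hm : 1 ≤ m) (hn : 1 ≤ n) (hmn : 3 ≤ m + n) :
    (⨅ μ : {f : Fin m ⊕ Fin n → ℝ // ∀ v, 0 < f v},
        ⨆ v, ⨆ r : {r : ℝ // 0 ≤ r},
          (∑ w ∈ graphBall (completeBipartiteGraph (Fin m) (Fin n)) v (2 * (r : ℝ)), μ.1 w) /
            (∑ w ∈ graphBall (completeBipartiteGraph (Fin m) (Fin n)) v (r : ℝ), μ.1 w)) =
      1 + Real.sqrt (m * n) := by
  haveI : NeZero m := ⟨by omega⟩
  haveI : NeZero n := ⟨by omega⟩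
  haveI hVne : Nonempty (Fin m ⊕ Fin n) := ⟨Sum.inl 0⟩
  haveI hRne : Nonempty {r : ℝ // 0 ≤ r} := ⟨⟨0, le_rfl⟩⟩
  haveI : Nonempty {f : Fin m ⊕ Fin n → ℝ // ∀ v, 0 < f v} := ⟨⟨fun _ => 1, fun _ => one_pos⟩⟩
  show (⨅ μ : {f : Fin m ⊕ Fin n → ℝ // ∀ v, 0 < f v},
      ⨆ v, ⨆ r : {r : ℝ // 0 ≤ r}, F m n μ.1 v (r : ℝ)) = 1 + Real.sqrt (m * n)
  have hmr : (1:ℝ) ≤ m := by exact_mod_cast hm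
  have hnr : (1:ℝ) ≤ n := by exact_mod_cast hn
  set x := Real.sqrt m with hxdef
  set y := Real.sqrt n with hydef
  have hx : 0 < x := Real.sqrt_pos.mpr (by linarith)
  have hy : 0 < y := Real.sqrt_pos.mpr (by linarith)
  have hx2 : x^2 = (m:ℝ) := Real.sq_sqrt (by linarith)
  have hy2 : y^2 = (n:ℝ) := Real.sq_sqrt (by linarith)
  have hxy : Real.sqrt ((m:ℝ) * n) = x*y := Real.sqrt_mul (by positivity) _
  -- boundedness of the inner sup
  have bddr : ∀ (μ : Fin m ⊕ Fin n → ℝ), (∀ v, 0 < μ v) → ∀ v,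
      BddAbove (Set.range fun r : {r:ℝ//0 ≤ r} => F m n μ v (r : ℝ)) := by
    intro μ hμ v
    refine BddAbove.mono ?_ (Set.toFinite
      ({1, (∑ w ∈ nbhd m n v, μ w)/μ v,
        (∑ w, μ w)/∑ w ∈ nbhd m n v, μ w} : Set ℝ)).bddAbove
    rintro z ⟨r, rfl⟩
    rw [Set.mem_insert_iff, Set.mem_insert_iff, Set.mem_singleton_iff]
    exact F_cases hm hn μ hμ v r.2
  have sup_ge_one : ∀ (μ : Fin m ⊕ Fin n → ℝ), (∀ v, 0 < μ v) →
      (1:ℝ) ≤ ⨆ v, ⨆ r : {r:ℝ//0 ≤ r}, F m n μ v (r : ℝ) := by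
    intro μ hμ
    have h1 : F m n μ (Sum.inl 0) (0:ℝ) ≤ ⨆ r : {r:ℝ//0 ≤ r}, F m n μ (Sum.inl 0) (r : ℝ) :=
      le_ciSup (bddr μ hμ _) ⟨0, le_rfl⟩
    rw [F_zero hm hn μ hμ] at h1
    exact h1.trans (le_ciSup (f := fun v => ⨆ r : {r:ℝ//0 ≤ r}, F m n μ v (r : ℝ))
      (Set.finite_range _).bddAbove (Sum.inl 0))
  have hBddBelow : BddBelow (Set.range fun μ : {f : Fin m ⊕ Fin n → ℝ // ∀ v, 0 < f v} =>
      ⨆ v, ⨆ r : {r:ℝ//0 ≤ r}, F m n μ.1 v (r : ℝ)) := by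
    refine ⟨1, ?_⟩; rintro z ⟨μ, rfl⟩; exact sup_ge_one μ.1 μ.2
  apply le_antisymm
  · -- upper bound via the explicit measure
    set μ₀ : Fin m ⊕ Fin n → ℝ := Sum.elim (fun _ => y) (fun _ => x) with hμ₀
    have hpos : ∀ v, 0 < μ₀ v := by rintro (i|j) <;> simpa [hμ₀] using by assumption
    have hsuminr : (∑ j : Fin n, μ₀ (Sum.inr j)) = n * x := by
      simp [hμ₀, Finset.sum_const, Finset.card_univ, mul_comm]
    have hsuminl : (∑ i : Fin m, μ₀ (Sum.inl i)) = m * y := by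
      simp [hμ₀, Finset.sum_const, Finset.card_univ, mul_comm]
    have hsumall : (∑ w, μ₀ w) = m*y + n*x := by
      rw [sum_all, hsuminl, hsuminr]
    refine le_trans (ciInf_le hBddBelow ⟨μ₀, hpos⟩) ?_
    refine ciSup_le fun v => ciSup_le fun r => ?_
    have hk1 := key_ineq x y (m:ℝ) (n:ℝ) hx hy hx2 hy2 hmr hnr
    have hk2 := key_ineq y x (n:ℝ) (m:ℝ) hy hx hy2 hx2 hnr hmr
    rcases F_cases hm hn μ₀ hpos v r.2 with h|h|h <;> rw [h, hxy]
    · nlinarith [mul_pos hx hy]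
    · match v with
      | .inl i =>
        rw [sum_nbhd_inl, hsuminr, show μ₀ (Sum.inl i) = y from rfl]
        exact hk1.1
      | .inr j =>
        rw [sum_nbhd_inr, hsuminl, show μ₀ (Sum.inr j) = x from rfl]
        calc (x + (m:ℝ)*y)/x ≤ 1 + y*x := hk2.1
          _ = 1 + x*y := by ring
    · match v with
      | .inl i =>
        rw [sum_nbhd_inl, hsuminr, hsumall, show μ₀ (Sum.inl i) = y from rfl]
        exact hk1.2
      | .inr j =>
        rw [sum_nbhd_inr, hsuminl, hsumall, show μ₀ (Sum.inr j) = x from rfl]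
        calc ((m:ℝ)*y + n*x)/(x + m*y) ≤ 1 + y*x := by
              have := hk2.2
              rw [show (n:ℝ)*x + m*y = m*y + n*x by ring] at this
              exact this
          _ = 1 + x*y := by ring
  · -- lower bound
    refine le_ciInf fun μ => ?_
    set C := ⨆ v, ⨆ r : {r:ℝ//0 ≤ r}, F m n μ.1 v (r : ℝ) with hC
    have hle : ∀ v (r : {r:ℝ//0 ≤ r}), F m n μ.1 v (r : ℝ) ≤ C := fun v r =>
      le_trans (le_ciSup (bddr μ.1 μ.2 v) r)
        (le_ciSup (f := fun v => ⨆ r : {r:ℝ//0 ≤ r}, F m n μ.1 v (r : ℝ))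
          (Set.finite_range _).bddAbove v)
    have h1C : (1:ℝ) ≤ C := sup_ge_one μ.1 μ.2
    set A := ∑ i, μ.1 (Sum.inl i) with hAdef
    set B := ∑ j, μ.1 (Sum.inr j) with hBdef
    have hA : 0 < A := Finset.sum_pos (fun _ _ => μ.2 _) Finset.univ_nonempty
    have hB : 0 < B := Finset.sum_pos (fun _ _ => μ.2 _) Finset.univ_nonempty
    have hBle : ∀ i : Fin m, B ≤ (C-1) * μ.1 (Sum.inl i) := by
      intro i
      have h := hle (Sum.inl i) ⟨1/2, by norm_num⟩
      have h' : F m n μ.1 (Sum.inl i) ((1:ℝ)/2) ≤ C := h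
      rw [F_half hm hn μ.1 μ.2, sum_nbhd_inl, div_le_iff₀ (μ.2 _)] at h'
      nlinarith [μ.2 (Sum.inl i)]
    have hAle : ∀ j : Fin n, A ≤ (C-1) * μ.1 (Sum.inr j) := by
      intro j
      have h := hle (Sum.inr j) ⟨1/2, by norm_num⟩
      have h' : F m n μ.1 (Sum.inr j) ((1:ℝ)/2) ≤ C := h
      rw [F_half hm hn μ.1 μ.2, sum_nbhd_inr, div_le_iff₀ (μ.2 _)] at h'
      nlinarith [μ.2 (Sum.inr j)]
    have hmB : (m:ℝ) * B ≤ (C-1) * A := by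
      have := Finset.sum_le_sum (fun i (_ : i ∈ Finset.univ) => hBle i)
      simpa [Finset.sum_const, Finset.card_univ, nsmul_eq_mul, ← Finset.mul_sum] using this
    have hnA : (n:ℝ) * A ≤ (C-1) * B := by
      have := Finset.sum_le_sum (fun j (_ : j ∈ Finset.univ) => hAle j)
      simpa [Finset.sum_const, Finset.card_univ, nsmul_eq_mul, ← Finset.mul_sum] using this
    have hmul : ((m:ℝ)*B) * ((n:ℝ)*A) ≤ ((C-1)*A) * ((C-1)*B) :=
      mul_le_mul hmB hnA (by positivity) (mul_nonneg (by linarith) hA.le)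
    have hkey : (m:ℝ)*(n:ℝ) ≤ (C-1)^2 := by nlinarith [mul_pos hA hB]
    have hsq : Real.sqrt ((m:ℝ)*n) ≤ C - 1 := by
      calc Real.sqrt ((m:ℝ)*n) ≤ Real.sqrt ((C-1)^2) := Real.sqrt_le_sqrt hkey
        _ = C - 1 := Real.sqrt_sq (by linarith)
    linarith
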